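/- arXiv:2006.06544 — 2 statements merged into one kernel-verified Lean document; each statement's English description precedes it below -/
import Mathlib

section
/- Under the assumptions of the previous statement (contraction factor δ for F−G, Lipschitz constant γ ≤ 1 for G), the Parareal errors satisfy the sharper superlinear-type bound ‖e_n^{(k)}‖ ≤ δ^k · binom(n, k) · max_m ‖e_m^{(0)}‖ for all 1 ≤ k ≤ n; in particular e_n^{(k)} = 0 for k ≥ n. -/
/-- Superlinear Parareal bound: if `‖(F - G) z‖ ≤ δ ‖z‖` and `‖G z‖ ≤ ‖z‖`, then
`‖e n k‖ ≤ δ^k * binom(n, k) * M` for `1 ≤ k ≤ n`, where `M` bounds the initial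
errors; in particular the error vanishes for `k ≥ n`. -/
theorem parareal_superlinear_bound (d : ℕ)
    (F G : ℕ → (Fin d → ℝ) →ₗ[ℝ] (Fin d → ℝ)) (δ : ℝ) (hδ0 : 0 ≤ δ)
    (hδ : ∀ n z, ‖F n z - G n z‖ ≤ δ * ‖z‖)
    (hG : ∀ n z, ‖G n z‖ ≤ ‖z‖)
    (xs : ℕ → (Fin d → ℝ)) (hxs : ∀ n, xs (n + 1) = F (n + 1) (xs n))
    (X : ℕ → ℕ → (Fin d → ℝ)) (hX0 : ∀ k, X k 0 = xs 0)
    (hrec : ∀ k n, X (k + 1) (n + 1) =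
      F (n + 1) (X k n) + G (n + 1) (X (k + 1) n) - G (n + 1) (X k n))
    (M : ℝ) (hM : ∀ n, ‖X 0 n - xs n‖ ≤ M) :
    (∀ k n, 1 ≤ k → k ≤ n →
      ‖X k n - xs n‖ ≤ δ ^ k * (n.choose k : ℝ) * M) ∧
    (∀ k n, n ≤ k → X k n = xs n) := by
  have hM0 : 0 ≤ M := le_trans (norm_nonneg _) (hM 0)
  -- error recurrence
  have key : ∀ k n, X (k+1) (n+1) - xs (n+1) =
      ((F (n+1)) (X k n - xs n) - (G (n+1)) (X k n - xs n))
        + (G (n+1)) (X (k+1) n - xs n) := by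
    intro k n
    rw [hrec, hxs, map_sub, map_sub, map_sub]
    abel
  -- part 2: errors vanish for n ≤ k (induction on n)
  have part2 : ∀ n k, n ≤ k → X k n = xs n := by
    intro n
    induction n with
    | zero => intro k _; exact hX0 k
    | succ m ih =>
      intro k hk
      obtain ⟨j, rfl⟩ : ∃ j, k = j + 1 := ⟨k - 1, by omega⟩
      have hj : m ≤ j := Nat.succ_le_succ_iff.mp hk
      rw [hrec, ih j hj, ih (j+1) (le_trans hj (Nat.le_succ j)), hxs]
      abel
  -- main bound, for all k, n
  have main : ∀ k n, ‖X k n - xs n‖ ≤ δ ^ k * (n.choose k : ℝ) * M := by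
    intro k
    induction k with
    | zero => intro n; simpa using hM n
    | succ k ihk =>
      intro n
      induction n with
      | zero =>
        rw [hX0, sub_self, norm_zero]
        exact mul_nonneg (mul_nonneg (pow_nonneg hδ0 _) (Nat.cast_nonneg _)) hM0
      | succ m ihn =>
        rw [key k m]
        calc ‖((F (m+1)) (X k m - xs m) - (G (m+1)) (X k m - xs m))
              + (G (m+1)) (X (k+1) m - xs m)‖
            ≤ ‖(F (m+1)) (X k m - xs m) - (G (m+1)) (X k m - xs m)‖
              + ‖(G (m+1)) (X (k+1) m - xs m)‖ := norm_add_le _ _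
          _ ≤ δ * ‖X k m - xs m‖ + ‖X (k+1) m - xs m‖ :=
              add_le_add (hδ (m+1) _) (hG (m+1) _)
          _ ≤ δ * (δ ^ k * (m.choose k : ℝ) * M)
              + δ ^ (k+1) * (m.choose (k+1) : ℝ) * M :=
              add_le_add (mul_le_mul_of_nonneg_left (ihk m) hδ0) ihn
          _ = δ ^ (k+1) * ((m.choose k : ℝ) + (m.choose (k+1) : ℝ)) * M := by ring
          _ = δ ^ (k+1) * ((m+1).choose (k+1) : ℝ) * M := by
              rw [Nat.choose_succ_succ]; push_cast; ring
    
  exact ⟨fun k n _ _ => main k n, fun k n hn => part2 n k hn⟩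
end

section
/- Let y : ℝ → ℝ^{n·N_p} solve the Galerkin-reduced MPDE system 𝒜 y' + ℬ y = 𝒞(t₁) with 𝒜 = A ⊗ J and ℬ = B ⊗ J + A ⊗ Q, where J is symmetric positive definite, Q is skew-symmetric, A is symmetric positive definite, and the symmetric part of B is positive semidefinite. If 𝒞 ≡ 0 then the energy E(t) = y(t)ᵀ 𝒜 y(t) is non-increasing. -/
/-!
Since `𝒜` is symmetric, `d/dt (yᵀ 𝒜 y) = 2 yᵀ 𝒜 y' = -2 yᵀ ℬ y`, and the quadratic form of `ℬ`
only sees its symmetric part. Because `A` and `J` are symmetric and `Q` is skew, the `A ⊗ Q` term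
cancels from that symmetric part, leaving `((B + Bᵀ) / 2) ⊗ J`, which is positive semidefinite as
a Kronecker product of positive semidefinite matrices.
-/

open Matrix
open scoped Kronecker

namespace Matrix

theorem IsSymm.kronecker {m p : Type*} {A : Matrix m m ℝ} {J : Matrix p p ℝ} (hA : A.IsSymm)
    (hJ : J.IsSymm) : (A ⊗ₖ J).IsSymm := by
  rw [IsSymm, ← kroneckerMap_transpose, hA.eq, hJ.eq]

theorem symmPart_kronecker_add_kronecker {m p : Type*} {A B : Matrix m m ℝ}
    {J Q : Matrix p p ℝ} (hA : A.IsSymm) (hJ : J.IsSymm) (hQ : Qᵀ = -Q) :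
    (1 / 2 : ℝ) • ((B ⊗ₖ J + A ⊗ₖ Q) + (B ⊗ₖ J + A ⊗ₖ Q)ᵀ) = ((1 / 2 : ℝ) • (B + Bᵀ)) ⊗ₖ J := by
  have hneg : A ⊗ₖ (-Q) = -(A ⊗ₖ Q) := by
    ext
    simp
  rw [transpose_add, ← kroneckerMap_transpose, ← kroneckerMap_transpose, hA.eq, hJ.eq, hQ, hneg,
    smul_kronecker, add_kronecker]
  congr 1
  abel

theorem dotProduct_mulVec_comm_of_isSymm {ι : Type*} [Fintype ι] {M : Matrix ι ι ℝ}
    (hM : M.IsSymm) (u v : ι → ℝ) : u ⬝ᵥ M *ᵥ v = v ⬝ᵥ M *ᵥ u := by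
  rw [dotProduct_mulVec, dotProduct_comm, ← mulVec_transpose, hM.eq]

theorem dotProduct_mulVec_self_nonneg_of_posSemidef_symm {ι : Type*} [Fintype ι]
    {M : Matrix ι ι ℝ} (hM : ((1 / 2 : ℝ) • (M + Mᵀ)).PosSemidef) (x : ι → ℝ) :
    0 ≤ x ⬝ᵥ M *ᵥ x := by
  have h := hM.dotProduct_mulVec_nonneg x
  rwa [star_trivial, smul_mulVec, dotProduct_smul, add_mulVec, dotProduct_add,
    mulVec_transpose, dotProduct_comm x (x ᵥ* M), ← dotProduct_mulVec, ← two_mul, smul_eq_mul,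
    ← mul_assoc, one_div_mul_cancel two_ne_zero, one_mul] at h

end Matrix

theorem HasDerivAt.dotProduct_mulVec {ι : Type*} [Fintype ι] {M : Matrix ι ι ℝ}
    {y : ℝ → ι → ℝ} {y' : ι → ℝ} {t : ℝ} (hy : HasDerivAt y y' t) :
    HasDerivAt (fun s => y s ⬝ᵥ M *ᵥ y s) (y' ⬝ᵥ M *ᵥ y t + y t ⬝ᵥ M *ᵥ y') t := by
  have hMy : HasDerivAt (fun s => M *ᵥ y s) (M *ᵥ y') t :=
    (LinearMap.toContinuousLinearMap M.mulVecLin).hasFDerivAt.comp_hasDerivAt t hy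
  have hcoord := hasDerivAt_pi.mp hy
  have hMcoord := hasDerivAt_pi.mp hMy
  simp only [dotProduct, ← Finset.sum_add_distrib]
  exact HasDerivAt.fun_sum fun i _ => (hcoord i).mul (hMcoord i)

theorem antitone_energy_of_mulVec_deriv_add_mulVec_eq_zero {ι : Type*} [Fintype ι]
    {𝒜 ℬ : Matrix ι ι ℝ} (h𝒜 : 𝒜.IsSymm) (hℬ : ((1 / 2 : ℝ) • (ℬ + ℬᵀ)).PosSemidef)
    {y : ℝ → ι → ℝ} (hy : Differentiable ℝ y) (hode : ∀ t, 𝒜 *ᵥ deriv y t + ℬ *ᵥ y t = 0) :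
    Antitone fun t => y t ⬝ᵥ 𝒜 *ᵥ y t := by
  have hE t := (hy t).hasDerivAt.dotProduct_mulVec (M := 𝒜)
  refine antitone_of_deriv_nonpos (fun t => (hE t).differentiableAt) fun t => ?_
  have h𝒜y' : 𝒜 *ᵥ deriv y t = -(ℬ *ᵥ y t) := eq_neg_of_add_eq_zero_left (hode t)
  have hℬy := dotProduct_mulVec_self_nonneg_of_posSemidef_symm hℬ (y t)
  rw [(hE t).deriv, dotProduct_mulVec_comm_of_isSymm h𝒜, h𝒜y', dotProduct_neg]
  linarith

/-- For the Galerkin-reduced MPDE system `𝒜 y' + ℬ y = 0` with `𝒜 = A ⊗ J` and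
`ℬ = B ⊗ J + A ⊗ Q`, where `A`, `J` are SPD, `Q` is skew-symmetric, and the
symmetric part of `B` is positive semidefinite, the energy `E t = y tᵀ 𝒜 y t`
is non-increasing. -/
theorem mpde_galerkin_energy_decay (n Np : ℕ)
    (A B : Matrix (Fin n) (Fin n) ℝ) (J Q : Matrix (Fin Np) (Fin Np) ℝ)
    (hA : A.PosDef) (hJ : J.PosDef) (hQ : Qᵀ = -Q)
    (hB : ((1/2 : ℝ) • (B + Bᵀ)).PosSemidef)
    (𝒜 ℬ : Matrix (Fin n × Fin Np) (Fin n × Fin Np) ℝ)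
    (h𝒜 : 𝒜 = A ⊗ₖ J) (hℬ : ℬ = B ⊗ₖ J + A ⊗ₖ Q)
    (y : ℝ → (Fin n × Fin Np → ℝ)) (hy : Differentiable ℝ y)
    (hode : ∀ t, 𝒜.mulVec (deriv y t) + ℬ.mulVec (y t) = 0)
    (E : ℝ → ℝ) (hE : ∀ t, E t = y t ⬝ᵥ 𝒜.mulVec (y t)) :
    Antitone E := by
  have hAsymm : A.IsSymm := isHermitian_iff_isSymm.mp hA.isHermitian
  have hJsymm : J.IsSymm := isHermitian_iff_isSymm.mp hJ.isHermitian
  have hℬsymm : ((1 / 2 : ℝ) • (ℬ + ℬᵀ)).PosSemidef := by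
    rw [hℬ, symmPart_kronecker_add_kronecker hAsymm hJsymm hQ]
    exact hB.kronecker hJ.posSemidef
  rw [funext hE]
  exact antitone_energy_of_mulVec_deriv_add_mulVec_eq_zero (h𝒜 ▸ hAsymm.kronecker hJsymm)
    hℬsymm hy hode
end
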